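/- For a nonempty compact convex set K ⊆ ℂ, define its support function h_K(u) := sSup {(x * (starRingEnd ℂ u)).re : x ∈ K} for u ∈ ℂ, and its Steiner point st(K) := (1/π) • ∫_{θ ∈ [0, 2π]} h_K(Complex.exp(θ * Complex.I)) • Complex.exp(θ * Complex.I) dθ ∈ ℂ. Then for every r > 0, setting D := {a + b : a ∈ K, b ∈ Metric.closedBall 0 r} (the Minkowski sum of K with the closed disk of radius r), one has st(D) = st(K), and st(D) ∈ K. -/

import Mathlib

open MeasureTheory

noncomputable section

/-- The support function of a set `K ⊆ ℂ`: `h_K(u) = sup_{x ∈ K} ⟪x, u⟫`, where the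
Euclidean inner product is `(x * conj u).re`. -/
def supportFn (K : Set ℂ) (u : ℂ) : ℝ :=
  sSup ((fun x => (x * (starRingEnd ℂ) u).re) '' K)

/-- The Steiner point of a set `K ⊆ ℂ`:
`st(K) = (1/π) ∫_{0}^{2π} h_K(e^{iθ}) e^{iθ} dθ`. -/
def steinerPoint (K : Set ℂ) : ℂ :=
  (1 / Real.pi) •
    ∫ θ in Set.Icc (0 : ℝ) (2 * Real.pi),
      supportFn K (Complex.exp (θ * Complex.I)) • Complex.exp (θ * Complex.I)

/-!
The support function of `K + rB²` is `h_K + r‖·‖`, and `∫₀^{2π} e^{iθ} dθ = 0`, so the disk does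
not move the Steiner point. For `st(K) ∈ K` it suffices, by Hahn–Banach separation, that
`⟪u, st(K)⟫ ≤ h_K(u)` for every unit vector `u = e^{iφ}`. With `G(t) = h_K(e^{i(t+φ)})` the left
side is `(1/π) ∫₀^{2π} G(t) cos t dt`. Pairing `t` with `π - t` for `|t| ≤ π/2`, where `cos t ≥ 0`,
and using `e^{i(t+φ)} - e^{i(π-t+φ)} = 2 cos t · u`, subadditivity of `h_K` gives
`G(t) - G(π - t) ≤ 2 cos t · G(0)`; integrating against `cos t` yields `π G(0)`.
-/

open Real Set intervalIntegral Bornology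
open scoped InnerProductSpace Pointwise

section SupportFunction

variable {E : Type*} [NormedAddCommGroup E] [InnerProductSpace ℝ E] {K L : Set E}

def supportFunction (K : Set E) (u : E) : ℝ :=
  sSup ((fun x => ⟪u, x⟫_ℝ) '' K)

lemma bddAbove_inner_image (hK : IsBounded K) (u : E) :
    BddAbove ((fun x => ⟪u, x⟫_ℝ) '' K) := by
  obtain ⟨R, hR⟩ := hK.exists_norm_le
  refine ⟨‖u‖ * R, forall_mem_image.2 fun x hx => ?_⟩
  exact (real_inner_le_norm u x).trans (mul_le_mul_of_nonneg_left (hR x hx) (norm_nonneg u))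

lemma inner_le_supportFunction (hK : IsBounded K) {x : E} (hx : x ∈ K) (u : E) :
    ⟪u, x⟫_ℝ ≤ supportFunction K u :=
  le_csSup (bddAbove_inner_image hK u) (mem_image_of_mem _ hx)

lemma supportFunction_le (hne : K.Nonempty) {u : E} {c : ℝ} (h : ∀ x ∈ K, ⟪u, x⟫_ℝ ≤ c) :
    supportFunction K u ≤ c :=
  csSup_le (hne.image _) (forall_mem_image.2 h)

lemma supportFunction_smul (K : Set E) {a : ℝ} (ha : 0 ≤ a) (u : E) :
    supportFunction K (a • u) = a * supportFunction K u := by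
  simp only [supportFunction, real_inner_smul_left, ← smul_eq_mul, ← Real.sSup_smul_of_nonneg ha,
    ← image_smul, image_image]

lemma supportFunction_add_le (hne : K.Nonempty) (hK : IsBounded K) (u v : E) :
    supportFunction K (u + v) ≤ supportFunction K u + supportFunction K v :=
  supportFunction_le hne fun x hx => by
    rw [inner_add_left]
    exact add_le_add (inner_le_supportFunction hK hx u) (inner_le_supportFunction hK hx v)

lemma continuous_supportFunction (hne : K.Nonempty) (hK : IsBounded K) :
    Continuous (supportFunction K) := by
  obtain ⟨R, hR⟩ := hK.exists_norm_le
  refine (LipschitzWith.of_le_add_mul' R fun u v => ?_).continuous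
  calc supportFunction K u ≤ supportFunction K v + supportFunction K (u - v) := by
        simpa using supportFunction_add_le hne hK v (u - v)
    _ ≤ supportFunction K v + R * dist u v := by
        refine add_le_add le_rfl (supportFunction_le hne fun x hx => ?_)
        rw [dist_eq_norm, mul_comm]
        exact (real_inner_le_norm _ x).trans
          (mul_le_mul_of_nonneg_left (hR x hx) (norm_nonneg _))

lemma supportFunction_add (hKne : K.Nonempty) (hK : IsBounded K) (hLne : L.Nonempty)
    (hL : IsBounded L) (u : E) :
    supportFunction (K + L) u = supportFunction K u + supportFunction L u := by
  rw [supportFunction, supportFunction, supportFunction, ← csSup_add (hKne.image _)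
    (bddAbove_inner_image hK u) (hLne.image _) (bddAbove_inner_image hL u)]
  exact congrArg sSup (image_add (innerSL ℝ u))

lemma supportFunction_closedBall {r : ℝ} (hr : 0 ≤ r) (u : E) :
    supportFunction (Metric.closedBall 0 r) u = r * ‖u‖ := by
  refine le_antisymm (supportFunction_le ⟨0, Metric.mem_closedBall_self hr⟩ fun x hx => ?_) ?_
  · rw [mem_closedBall_zero_iff] at hx
    exact (real_inner_le_norm u x).trans
      (by rw [mul_comm]; exact mul_le_mul_of_nonneg_right hx (norm_nonneg u))
  · rcases eq_or_ne u 0 with rfl | hu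
    · simpa using inner_le_supportFunction Metric.isBounded_closedBall
        (Metric.mem_closedBall_self hr) (0 : E)
    have hnu : ‖u‖ ≠ 0 := norm_ne_zero_iff.2 hu
    have hx : (r / ‖u‖) • u ∈ Metric.closedBall (0 : E) r := by
      rw [mem_closedBall_zero_iff, norm_smul, Real.norm_of_nonneg (by positivity),
        div_mul_cancel₀ r hnu]
    calc r * ‖u‖ = ⟪u, (r / ‖u‖) • u⟫_ℝ := by
          rw [real_inner_smul_right, real_inner_self_eq_norm_sq]; field_simp
      _ ≤ _ := inner_le_supportFunction Metric.isBounded_closedBall hx u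

lemma mem_of_forall_inner_le_supportFunction [CompleteSpace E] (hne : K.Nonempty)
    (hclosed : IsClosed K) (hconv : Convex ℝ K) {p : E}
    (h : ∀ u, ⟪u, p⟫_ℝ ≤ supportFunction K u) : p ∈ K := by
  by_contra hp
  obtain ⟨f, c, hfK, hfp⟩ := geometric_hahn_banach_closed_point hconv hclosed hp
  have hf : ∀ x, ⟪(InnerProductSpace.toDual ℝ E).symm f, x⟫_ℝ = f x := fun x =>
    InnerProductSpace.toDual_symm_apply
  have hc := supportFunction_le hne fun x hx => (hf x ▸ hfK x hx).le
  linarith [h ((InnerProductSpace.toDual ℝ E).symm f), hf p]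

end SupportFunction

lemma supportFn_eq_supportFunction (K : Set ℂ) : supportFn K = supportFunction K := by
  ext u
  simp only [supportFn, supportFunction, Complex.inner]

lemma steinerPoint_eq_intervalIntegral (K : Set ℂ) : steinerPoint K = (1 / π) •
    ∫ θ in (0)..(2 * π), supportFunction K (Complex.exp (θ * Complex.I)) •
      Complex.exp (θ * Complex.I) := by
  rw [steinerPoint, supportFn_eq_supportFunction, integral_Icc_eq_integral_Ioc,
    ← integral_of_le (by positivity)]

lemma integral_exp_mul_I_eq_zero : ∫ θ in (0)..(2 * π), Complex.exp (θ * Complex.I) = 0 := by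
  simp_rw [mul_comm _ Complex.I]
  rw [integral_exp_mul_complex Complex.I_ne_zero]
  push_cast
  rw [mul_comm Complex.I, Complex.exp_two_pi_mul_I]
  simp

lemma inner_exp_mul_I (φ θ : ℝ) :
    ⟪Complex.exp (φ * Complex.I), Complex.exp (θ * Complex.I)⟫_ℝ = cos (θ - φ) := by
  rw [Complex.inner, ← Complex.exp_conj, ← Complex.exp_add, map_mul, Complex.conj_ofReal,
    Complex.conj_I, show (θ : ℂ) * Complex.I + φ * -Complex.I = (θ - φ : ℝ) * Complex.I by
      push_cast; ring, Complex.exp_ofReal_mul_I_re]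

lemma exp_mul_I_sub_exp_pi_sub_mul_I (t φ : ℝ) :
    Complex.exp ((t + φ : ℝ) * Complex.I) - Complex.exp ((π - t + φ : ℝ) * Complex.I) =
      (2 * cos t) • Complex.exp (φ * Complex.I) := by
  simp only [Complex.ofReal_add, Complex.ofReal_sub, add_mul, sub_mul, Complex.exp_add,
    Complex.exp_sub, Complex.exp_pi_mul_I, Complex.real_smul, Complex.ofReal_mul,
    Complex.ofReal_cos, Complex.cos, neg_mul, Complex.exp_neg, Complex.ofReal_ofNat]
  have := Complex.exp_ne_zero (t * Complex.I)
  field_simp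
  ring

lemma integral_mul_cos_le {G : ℝ → ℝ} (hG : Continuous G) (hper : Function.Periodic G (2 * π))
    (h : ∀ t ∈ Icc (-(π / 2)) (π / 2), G t - G (π - t) ≤ 2 * cos t * G 0) :
    ∫ t in (0)..(2 * π), G t * cos t ≤ π * G 0 := by
  have hF : Continuous fun t => G t * cos t := hG.mul continuous_cos
  have hshift : ∫ t in (0)..(2 * π), G t * cos t =
      ∫ t in (-(π / 2))..(3 * π / 2), G t * cos t := by
    simpa [show -(π / 2) + 2 * π = 3 * π / 2 by ring] using
      (hper.mul cos_periodic).intervalIntegral_add_eq 0 (-(π / 2))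
  have hreflect : ∫ t in (π / 2)..(3 * π / 2), G t * cos t =
      ∫ t in (-(π / 2))..(π / 2), -(G (π - t) * cos t) := by
    have := integral_comp_sub_left (fun t => G t * cos t) (a := -(π / 2)) (b := π / 2) π
    simp only [cos_pi_sub, mul_neg] at this
    rw [this]
    congr 1 <;> ring
  calc ∫ t in (0)..(2 * π), G t * cos t
      = ∫ t in (-(π / 2))..(π / 2), (G t - G (π - t)) * cos t := by
        rw [hshift, ← integral_add_adjacent_intervals (hF.intervalIntegrable _ (π / 2))
          (hF.intervalIntegrable _ _), hreflect, ← integral_add (hF.intervalIntegrable _ _)]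
        · simp_rw [sub_mul, sub_eq_add_neg]
        · exact (by fun_prop : Continuous fun t => -(G (π - t) * cos t)).intervalIntegrable _ _
    _ ≤ ∫ t in (-(π / 2))..(π / 2), 2 * G 0 * cos t ^ 2 := by
        refine integral_mono_on (by linarith [pi_pos]) ?_ ?_ fun t ht => ?_
        · exact (by fun_prop : Continuous fun t => (G t - G (π - t)) * cos t).intervalIntegrable ..
        · exact (by fun_prop : Continuous fun t => 2 * G 0 * cos t ^ 2).intervalIntegrable ..
        · calc (G t - G (π - t)) * cos t ≤ 2 * cos t * G 0 * cos t :=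
                mul_le_mul_of_nonneg_right (h t ht) (cos_nonneg_of_mem_Icc ht)
            _ = 2 * G 0 * cos t ^ 2 := by ring
    _ = π * G 0 := by
        rw [intervalIntegral.integral_const_mul, integral_cos_sq, cos_neg, cos_pi_div_two]
        ring

section SteinerPoint

variable {K : Set ℂ}

lemma supportFunction_exp_mul_I_sub_le (hne : K.Nonempty) (hK : IsBounded K) {t : ℝ}
    (ht : 0 ≤ cos t) (φ : ℝ) :
    supportFunction K (Complex.exp ((t + φ : ℝ) * Complex.I)) -
        supportFunction K (Complex.exp ((π - t + φ : ℝ) * Complex.I)) ≤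
      2 * cos t * supportFunction K (Complex.exp (φ * Complex.I)) := by
  have := supportFunction_add_le hne hK (Complex.exp ((π - t + φ : ℝ) * Complex.I))
    (Complex.exp ((t + φ : ℝ) * Complex.I) - Complex.exp ((π - t + φ : ℝ) * Complex.I))
  rw [add_sub_cancel, exp_mul_I_sub_exp_pi_sub_mul_I,
    supportFunction_smul K (by positivity)] at this
  linarith

lemma inner_exp_mul_I_steinerPoint_le (hne : K.Nonempty) (hK : IsBounded K) (φ : ℝ) :
    ⟪Complex.exp (φ * Complex.I), steinerPoint K⟫_ℝ ≤
      supportFunction K (Complex.exp (φ * Complex.I)) := by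
  rw [steinerPoint_eq_intervalIntegral]
  set g : ℝ → ℝ := fun θ => supportFunction K (Complex.exp (θ * Complex.I)) with hg_def
  have hg : Continuous g := (continuous_supportFunction hne hK).comp (by fun_prop)
  have hper : Function.Periodic g (2 * π) := fun θ => by
    simp only [hg_def]
    push_cast
    rw [add_mul, Complex.exp_add, Complex.exp_two_pi_mul_I, mul_one]
  have hshift : ∫ θ in (0)..(2 * π), g θ * cos (θ - φ) =
      ∫ t in (0)..(2 * π), g (t + φ) * cos t := by
    have := integral_comp_add_right (fun θ => g θ * cos (θ - φ)) φ (a := 0) (b := 2 * π)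
    simp only [add_sub_cancel_right, zero_add] at this
    have hF : Function.Periodic (fun θ => g θ * cos (θ - φ)) (2 * π) :=
      hper.mul (cos_periodic.sub_const φ)
    rw [this, add_comm, hF.intervalIntegral_add_eq φ 0, zero_add]
  have hkey : ∫ t in (0)..(2 * π), g (t + φ) * cos t ≤ π * g φ := by
    simpa using integral_mul_cos_le (G := fun t => g (t + φ)) (by fun_prop) (hper.add_const φ)
      fun t ht => by
        rw [zero_add]
        exact supportFunction_exp_mul_I_sub_le hne hK (cos_nonneg_of_mem_Icc ht) φ
  have hint : IntervalIntegrable (fun θ : ℝ => g θ • Complex.exp (θ * Complex.I)) volume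
      0 (2 * π) :=
    (by fun_prop : Continuous fun θ : ℝ => g θ • Complex.exp (θ * Complex.I)).intervalIntegrable ..
  change ⟪_, (1 / π) • ∫ θ in (0)..(2 * π), g θ • Complex.exp (θ * Complex.I)⟫_ℝ ≤ g φ
  have hcomm := (innerSL ℝ (Complex.exp (φ * Complex.I))).intervalIntegral_comp_comm hint
  simp only [innerSL_apply_apply, real_inner_smul_right, inner_exp_mul_I] at hcomm
  rw [real_inner_smul_right, ← hcomm]
  calc 1 / π * ∫ θ in (0)..(2 * π), g θ * cos (θ - φ) ≤ 1 / π * (π * g φ) := by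
        rw [hshift]; gcongr
    _ = g φ := by field_simp

lemma inner_steinerPoint_le (hne : K.Nonempty) (hK : IsBounded K) (u : ℂ) :
    ⟪u, steinerPoint K⟫_ℝ ≤ supportFunction K u := by
  rw [← Complex.norm_mul_exp_arg_mul_I u, ← Complex.real_smul, real_inner_smul_left,
    supportFunction_smul K (norm_nonneg u)]
  exact mul_le_mul_of_nonneg_left (inner_exp_mul_I_steinerPoint_le hne hK _) (norm_nonneg u)

lemma steinerPoint_mem (hne : K.Nonempty) (hK : IsCompact K) (hconv : Convex ℝ K) :
    steinerPoint K ∈ K :=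
  mem_of_forall_inner_le_supportFunction hne hK.isClosed hconv
    (inner_steinerPoint_le hne hK.isBounded)

lemma steinerPoint_add_closedBall (hne : K.Nonempty) (hK : IsBounded K) {r : ℝ} (hr : 0 ≤ r) :
    steinerPoint (K + Metric.closedBall 0 r) = steinerPoint K := by
  have hsupp (θ : ℝ) :
      supportFunction (K + Metric.closedBall 0 r) (Complex.exp (θ * Complex.I)) •
          Complex.exp (θ * Complex.I) =
        supportFunction K (Complex.exp (θ * Complex.I)) • Complex.exp (θ * Complex.I) +
          r • Complex.exp (θ * Complex.I) := by
    rw [supportFunction_add hne hK (Metric.nonempty_closedBall.2 hr) Metric.isBounded_closedBall,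
      supportFunction_closedBall hr, Complex.norm_exp_ofReal_mul_I, mul_one, add_smul]
  have hcont : Continuous fun θ : ℝ =>
      supportFunction K (Complex.exp (θ * Complex.I)) • Complex.exp (θ * Complex.I) :=
    ((continuous_supportFunction hne hK).comp (by fun_prop)).smul (by fun_prop)
  simp_rw [steinerPoint_eq_intervalIntegral, hsupp]
  rw [integral_add (hcont.intervalIntegrable _ _) ((by fun_prop : Continuous fun θ : ℝ =>
    r • Complex.exp (θ * Complex.I)).intervalIntegrable _ _), intervalIntegral.integral_smul,
    integral_exp_mul_I_eq_zero, smul_zero, add_zero]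

end SteinerPoint

/-- The Steiner point of the Minkowski sum `D = K + rB²` of a nonempty compact convex
set `K ⊆ ℂ` with a closed disk equals the Steiner point of `K`, and lies in `K`. -/
theorem steinerPoint_minkowski_sum
    (K : Set ℂ) (hne : K.Nonempty) (hK : IsCompact K) (hconv : Convex ℝ K)
    (r : ℝ) (hr : 0 < r)
    (D : Set ℂ)
    (hD : D = {p : ℂ | ∃ a ∈ K, ∃ b ∈ Metric.closedBall (0 : ℂ) r, p = a + b}) :
    steinerPoint D = steinerPoint K ∧ steinerPoint D ∈ K := by
  have hD_add : D = K + Metric.closedBall 0 r := by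
    ext p
    simp [hD, mem_add, eq_comm]
  have hst : steinerPoint D = steinerPoint K :=
    hD_add ▸ steinerPoint_add_closedBall hne hK.isBounded hr.le
  exact ⟨hst, hst ▸ steinerPoint_mem hne hK hconv⟩
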